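/- Let q_j ∈ F_2[w_2, w_3] satisfy q_0 = 1, q_{<0} = 0, q_j = w_2 q_{j−2} + w_3 q_{j−3}. Then for all s ≥ 0 and all j ≥ 1 + 3·2^s, one has q_j = w_2^{2^s} q_{j − 2·2^s} + w_3^{2^s} q_{j − 3·2^s}. -/
import Mathlib


open MvPolynomial

/-- The polynomials `q j ∈ F₂[w₂,w₃]` (with `w₂ = X 0`, `w₃ = X 1`): `q 0 = 1`,
`q j = 0` for `j < 0`, and `q j = w₂ q (j-2) + w₃ q (j-3)`. -/
noncomputable def q3 (j : ℤ) : MvPolynomial (Fin 2) (ZMod 2) :=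
  if j < 0 then 0
  else if j = 0 then 1
  else X 0 * q3 (j - 2) + X 1 * q3 (j - 3)
termination_by j.toNat
decreasing_by all_goals omega

lemma q3_rec (j : ℤ) (hj : 1 ≤ j) : q3 j = X 0 * q3 (j - 2) + X 1 * q3 (j - 3) := by
  rw [q3, if_neg (by omega), if_neg (by omega)]

/-- For all `s ≥ 0` and all `j ≥ 1 + 3·2^s`:
`q_j = w₂^{2^s} q_{j − 2·2^s} + w₃^{2^s} q_{j − 3·2^s}`. -/
theorem q3_frobenius_recursion (s : ℕ) (j : ℤ) (hj : 1 + 3 * 2 ^ s ≤ j) :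
    q3 j = (X 0) ^ (2 ^ s) * q3 (j - 2 * 2 ^ s) + (X 1) ^ (2 ^ s) * q3 (j - 3 * 2 ^ s) := by
  induction s generalizing j with
  | zero => simpa using q3_rec j (by omega)
  | succ s ih =>
    have hk : (0:ℤ) < 2 ^ s := by positivity
    have e1 : (2:ℤ) ^ (s+1) = 2 ^ s + 2 ^ s := by ring
    rw [e1] at hj
    rw [ih j (by linarith), ih (j - 2 * 2 ^ s) (by linarith), ih (j - 3 * 2 ^ s) (by linarith)]
    have h2 : (2 : MvPolynomial (Fin 2) (ZMod 2)) = 0 := by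
      have := CharP.cast_eq_zero (MvPolynomial (Fin 2) (ZMod 2)) 2
      simpa using this
    have e2 : j - 2 * 2 ^ s - 2 * 2 ^ s = j - 2 * 2 ^ (s+1) := by ring
    have e3 : j - 2 * 2 ^ s - 3 * 2 ^ s = j - 3 * 2 ^ s - 2 * 2 ^ s := by ring
    have e4 : j - 3 * 2 ^ s - 3 * 2 ^ s = j - 3 * 2 ^ (s+1) := by ring
    rw [e2, e3, e4]
    have e5 : 2 ^ (s+1) = 2 ^ s + 2 ^ s := by ring
    rw [e5, pow_add, pow_add]
    linear_combination (X 0 ^ 2 ^ s * X 1 ^ 2 ^ s * q3 (j - 3 * 2 ^ s - 2 * 2 ^ s)) * h2
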